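/- Let G be a Hausdorff topological group and X an abelian G-group (G acts continuously by automorphisms). If X is G-minimal and the action is topologically exact, then the topological semidirect product X ⋊ G is a minimal topological group. -/

import Mathlib

/-!
Let `t` be a Hausdorff group topology on `X ⋊ G` coarser than the product topology. Conjugation
by `inr g` realises the action of `g` on `inl X`, so the topology that `t` induces on `X` is a
coarser Hausdorff group topology for which `G` still acts continuously; by `G`-minimality it is
the topology of `X`. Since `X` is abelian, conjugation by any `s` acts on `inl X` as
`φ s.right`, so the action is also continuous for the topology coinduced on `G` by the open
quotient map `rightHom`; by topological exactness this is the topology of `G`. Then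
`s ↦ (s.left, s.right)` is `t`-continuous, as `inl (s.left) = s * (inr s.right)⁻¹`, so `t` is the
product topology.
-/

open Topology SemidirectProduct

/-- The product topology on the semidirect product `X ⋊[φ] G`. -/
def sdpTopology {X G : Type*} [Group X] [Group G] [TopologicalSpace X] [TopologicalSpace G]
    (φ : G →* MulAut X) : TopologicalSpace (X ⋊[φ] G) :=
  TopologicalSpace.induced (fun p : X ⋊[φ] G => (p.left, p.right)) inferInstance

namespace MonoidHom

variable {A B : Type*} [Group A] [Group B] [tA : TopologicalSpace A] [IsTopologicalGroup A]
  {f : A →* B}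

theorem isOpenQuotientMap_coinduced (hf : Function.Surjective f) :
    @IsOpenQuotientMap A B tA (tA.coinduced f) f :=
  let := tA.coinduced f
  isOpenQuotientMap_of_isQuotientMap ⟨⟨rfl⟩, hf⟩

theorem isTopologicalGroup_coinduced (hf : Function.Surjective f) :
    @IsTopologicalGroup B (tA.coinduced f) _ := by
  let := tA.coinduced f
  have hq := isOpenQuotientMap_coinduced hf
  refine { continuous_mul := ?_, continuous_inv := ?_ }
  · rw [← (hq.prodMap hq).continuous_comp_iff]
    simpa only [Function.comp_def, Prod.map, map_mul] using hq.continuous.comp continuous_mul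
  · rw [← hq.continuous_comp_iff]
    simpa only [Function.comp_def, map_inv] using hq.continuous.comp continuous_inv

end MonoidHom

namespace SemidirectProduct

variable {X G : Type*}

theorem mul_inl_mul_inv [CommGroup X] [Group G] {φ : G →* MulAut X} (s : X ⋊[φ] G) (x : X) :
    s * inl x * s⁻¹ = inl (φ s.right x) := by
  ext <;> simp [mul_comm, mul_assoc]

section Group

variable [Group X] [Group G] {φ : G →* MulAut X} [t : TopologicalSpace (X ⋊[φ] G)]
  [tG : TopologicalSpace G]

theorem le_coinduced_rightHom (hinr : Continuous (inr : G → X ⋊[φ] G)) :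
    tG ≤ t.coinduced rightHom := by
  have : rightHom ∘ inr = (id : G → G) := funext (rightHom_inr (φ := φ))
  calc tG = (tG.coinduced inr).coinduced rightHom := by rw [coinduced_compose, this, coinduced_id]
    _ ≤ t.coinduced rightHom := coinduced_mono hinr.coinduced_le

variable [tX : TopologicalSpace X]

theorem continuous_inl_of_sdpTopology_le (h : sdpTopology φ ≤ t) :
    Continuous (inl : X → X ⋊[φ] G) :=
  continuous_le_rng h (continuous_induced_rng.mpr (continuous_id.prodMk continuous_const))

theorem continuous_inr_of_sdpTopology_le (h : sdpTopology φ ≤ t) :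
    Continuous (inr : G → X ⋊[φ] G) :=
  continuous_le_rng h (continuous_induced_rng.mpr (continuous_const.prodMk continuous_id))

variable [IsTopologicalGroup (X ⋊[φ] G)]

theorem continuous_action_of_isInducing_inl (hinl : IsInducing (inl : X → X ⋊[φ] G))
    (hinr : Continuous (inr : G → X ⋊[φ] G)) :
    Continuous fun p : G × X => φ p.1 p.2 := by
  refine hinl.continuous_iff.mpr ?_
  simp only [Function.comp_def, inl_aut, map_inv]
  have := hinl.continuous
  fun_prop

theorem le_sdpTopology (hinl : IsInducing (inl : X → X ⋊[φ] G))
    (hinr : Continuous (inr : G → X ⋊[φ] G)) (hright : Continuous (rightHom : X ⋊[φ] G → G)) :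
    t ≤ sdpTopology φ := by
  have hleft : Continuous fun s : X ⋊[φ] G => s.left := by
    refine hinl.continuous_iff.mpr ?_
    have : ∀ s : X ⋊[φ] G, inl s.left = s * (inr (rightHom s))⁻¹ := fun s =>
      eq_mul_inv_of_mul_eq (inl_left_mul_inr_right s)
    simp only [Function.comp_def, this]
    fun_prop
  rw [← continuous_id_iff_le]
  exact continuous_induced_rng.mpr (hleft.prodMk hright)

end Group

variable [CommGroup X] [Group G] {φ : G →* MulAut X} [TopologicalSpace (X ⋊[φ] G)]
  [IsTopologicalGroup (X ⋊[φ] G)] [TopologicalSpace X]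

theorem continuous_action_rightHom (hinl : IsInducing (inl : X → X ⋊[φ] G)) :
    Continuous fun p : (X ⋊[φ] G) × X => φ (rightHom p.1) p.2 := by
  refine hinl.continuous_iff.mpr ?_
  simp only [Function.comp_def, rightHom_eq_right, ← mul_inl_mul_inv]
  have := hinl.continuous
  fun_prop

theorem continuous_action_of_isOpenQuotientMap_rightHom [tG : TopologicalSpace G]
    (hinl : IsInducing (inl : X → X ⋊[φ] G))
    (hright : IsOpenQuotientMap (rightHom : X ⋊[φ] G → G)) :
    Continuous fun p : G × X => φ p.1 p.2 := by
  rw [← (hright.prodMap IsOpenQuotientMap.id).continuous_comp_iff]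
  exact continuous_action_rightHom hinl

end SemidirectProduct

theorem minimal_semidirectProduct_general {X G : Type*} [CommGroup X] [Group G]
    [tX : TopologicalSpace X] [tG : TopologicalSpace G]
    (φ : G →* MulAut X)
    (hGmin : ∀ tX' : TopologicalSpace X, @IsTopologicalGroup X tX' _ → @T2Space X tX' →
      tX ≤ tX' →
      (@Continuous (G × X) X (@instTopologicalSpaceProd G X tG tX') tX'
        fun p => φ p.1 p.2) → tX' = tX)
    (htexact : ∀ tG' : TopologicalSpace G, @IsTopologicalGroup G tG' _ → tG ≤ tG' →
      (@Continuous (G × X) X (@instTopologicalSpaceProd G X tG' tX) tX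
        fun p => φ p.1 p.2) → tG' = tG) :
    ∀ t : TopologicalSpace (X ⋊[φ] G), @IsTopologicalGroup (X ⋊[φ] G) t _ →
      @T2Space (X ⋊[φ] G) t → sdpTopology φ ≤ t → t = sdpTopology φ := by
  intro t _ _ hle
  have hinl := continuous_inl_of_sdpTopology_le hle
  have hinr := continuous_inr_of_sdpTopology_le hle
  have hX : t.induced inl = tX :=
    hGmin _ (topologicalGroup_induced inl)
      (@IsEmbedding.t2Space _ _ (t.induced inl) _ _ _ inl_injective.isEmbedding_induced)
      (continuous_iff_le_induced.mp hinl)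
      (continuous_action_of_isInducing_inl (tX := t.induced inl) (.induced _) hinr)
  have hinl_inducing : IsInducing (inl : X → X ⋊[φ] G) := ⟨hX.symm⟩
  have hq := MonoidHom.isOpenQuotientMap_coinduced (rightHom_surjective (φ := φ))
  have hG : t.coinduced rightHom = tG :=
    htexact _ (MonoidHom.isTopologicalGroup_coinduced rightHom_surjective)
      (le_coinduced_rightHom hinr)
      (continuous_action_of_isOpenQuotientMap_rightHom (tG := t.coinduced rightHom)
        hinl_inducing hq)
  have hright : Continuous (rightHom : X ⋊[φ] G → G) := continuous_iff_coinduced_le.mpr hG.le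
  exact le_antisymm (le_sdpTopology hinl_inducing hinr hright) hle

/-- Let a Hausdorff topological group `G` act continuously by automorphisms on an
abelian Hausdorff topological group `X`. If `X` is `G`-minimal and the action is
topologically exact, then the topological semidirect product `X ⋊ G` is a minimal
topological group. -/
theorem minimal_semidirectProduct {X G : Type*} [CommGroup X] [Group G]
    [tX : TopologicalSpace X] [tG : TopologicalSpace G]
    [IsTopologicalGroup X] [IsTopologicalGroup G] [T2Space X] [T2Space G]
    (φ : G →* MulAut X)
    (hact : Continuous fun p : G × X => φ p.1 p.2)
    (hGmin : ∀ tX' : TopologicalSpace X, @IsTopologicalGroup X tX' _ → @T2Space X tX' →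
      tX ≤ tX' →
      (@Continuous (G × X) X (@instTopologicalSpaceProd G X tG tX') tX'
        fun p => φ p.1 p.2) → tX' = tX)
    (htexact : ∀ tG' : TopologicalSpace G, @IsTopologicalGroup G tG' _ → tG ≤ tG' →
      (@Continuous (G × X) X (@instTopologicalSpaceProd G X tG' tX) tX
        fun p => φ p.1 p.2) → tG' = tG) :
    ∀ t : TopologicalSpace (X ⋊[φ] G), @IsTopologicalGroup (X ⋊[φ] G) t _ →
      @T2Space (X ⋊[φ] G) t → sdpTopology φ ≤ t → t = sdpTopology φ :=
  minimal_semidirectProduct_general (tX := tX) (tG := tG) φ hGmin htexact
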